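/- If an impartial game with activeness G^g is equivalent to a nimber with activeness *^γ n for some γ ∈ {0,1}^∞, then n equals the ordinary Grundy value 𝒢(G^g). -/

import Mathlib

inductive AGame : Type where
  | mk : List AGame → Bool → AGame

namespace AGame

noncomputable instance : DecidableEq AGame := Classical.decEq _

def opts : AGame → List AGame | mk gs _ => gs
def act : AGame → Bool | mk _ g => g

theorem sizeOf_lt_of_mem {G G' : AGame} (h : G' ∈ G.opts) : sizeOf G' < sizeOf G := by
  cases G with
  | mk gs g =>
    simp only [opts] at h
    have := List.sizeOf_lt_of_mem h
    simp [AGame.mk.sizeOf_spec]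
    omega

/-- Disjunctive sum of games with activeness. -/
def add (G H : AGame) : AGame :=
  mk (G.opts.attach.map (fun x => add x.1 H) ++
      H.opts.attach.map (fun y => add G y.1)) (G.act || H.act)
termination_by sizeOf G + sizeOf H
decreasing_by
  · have := sizeOf_lt_of_mem x.2; omega
  · have := sizeOf_lt_of_mem y.2; omega

/-- `PPos G` means the outcome of `G` is 𝒫 (second player wins). -/
def PPos (G : AGame) : Prop :=
  G.act = false ∨ ∀ G' ∈ G.opts.attach, ¬ PPos G'.1
termination_by sizeOf G
decreasing_by
  have := sizeOf_lt_of_mem G'.2; omega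

/-- Hereditary set-equality (the paper's ≅). -/
def Identical (G H : AGame) : Prop :=
  G.act = H.act ∧ (∀ G' ∈ G.opts.attach, ∃ H' ∈ H.opts.attach, Identical G'.1 H'.1)
              ∧ (∀ H' ∈ H.opts.attach, ∃ G' ∈ G.opts.attach, Identical G'.1 H'.1)
termination_by sizeOf G + sizeOf H
decreasing_by
  · have := sizeOf_lt_of_mem G'.2; have := sizeOf_lt_of_mem H'.2; omega
  · have := sizeOf_lt_of_mem G'.2; have := sizeOf_lt_of_mem H'.2; omega

/-- Equivalence of games with activeness: same outcome in every sum. -/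
def Equiv (G H : AGame) : Prop := ∀ X : AGame, (PPos (add G X) ↔ PPos (add H X))

end AGame

namespace AGame

/-- Nimbers with activeness: `star γ n ≅ {star γ j : j < n}^{γ n}`. -/
def star (γ : ℕ → Bool) : ℕ → AGame
  | n => mk ((List.range n).attach.map (fun j => star γ j.1)) (γ n)
termination_by n => n
decreasing_by
  have := j.2; simp [List.mem_range] at this; omega

/-- The generalized Grundy set `𝒢^γ(G)`. -/
def GSet (γ : ℕ → Bool) (G : AGame) : Set ℕ := {n | PPos (add G (star γ n))}

/-- Minimum excludant of a set of naturals. -/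
noncomputable def mex (S : Set ℕ) : ℕ := sInf {n | n ∉ S}

/-- Ordinary Grundy value, computed ignoring activeness. -/
noncomputable def grundy (G : AGame) : ℕ :=
  mex {m | ∃ G' ∈ G.opts.attach, grundy G'.1 = m}
termination_by sizeOf G
decreasing_by
  have := sizeOf_lt_of_mem G'.2; omega

/-- The three types of games with activeness. -/
inductive AType : Type where
  | inactive : AType            -- type 0
  | activeSomeInactive : AType  -- type 1_{∃0}
  | activeAllActive : AType     -- type 1_{∀1}

open Classical in
/-- `type(G^g)`. -/
noncomputable def typ (G : AGame) : AType :=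
  if G.act = false then .inactive
  else if ∃ G' ∈ G.opts, G'.act = false then .activeSomeInactive
  else .activeAllActive

/-- Formal birthday `b(G)`. -/
def bday (G : AGame) : ℕ :=
  (G.opts.attach.map (fun G' => bday G'.1 + 1)).foldr max 0
termination_by sizeOf G
decreasing_by
  have := sizeOf_lt_of_mem G'.2; omega

/-- An option `G'` of `G` is reversible if it has an option equivalent to `G`. -/
def Reversible (G G' : AGame) : Prop := ∃ G'' ∈ G'.opts, Equiv G'' G

/-- A canonical game: all options canonical and no option reversible. -/
def Canonical (G : AGame) : Prop :=
  (∀ G' ∈ G.opts.attach, Canonical G'.1) ∧ (∀ G' ∈ G.opts, ¬ Reversible G G')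
termination_by sizeOf G
decreasing_by
  have := sizeOf_lt_of_mem G'.2; omega

/-- A transitive game: all options transitive and options of options are options. -/
def TransGame (G : AGame) : Prop :=
  (∀ G' ∈ G.opts.attach, TransGame G'.1) ∧ (∀ G' ∈ G.opts, ∀ G'' ∈ G'.opts, G'' ∈ G.opts)
termination_by sizeOf G
decreasing_by
  have := sizeOf_lt_of_mem G'.2; omega

/-- `G` is covered by `H` if every option of `G` is equivalent to some option of `H`. -/
def Covered (G H : AGame) : Prop := ∀ G' ∈ G.opts, ∃ H' ∈ H.opts, Equiv G' H'

/-- The relation `G ⋈ H`. -/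
def Bowtie (G H : AGame) : Prop :=
  (∀ G' ∈ G.opts, ¬ Equiv G' H) ∧ (∀ H' ∈ H.opts, ¬ Equiv G H')

/-- The linear chain `∅^{g₀ g₁ … gₙ}`. -/
def chain (g : ℕ → Bool) : ℕ → AGame
  | 0 => mk [] (g 0)
  | n + 1 => mk [chain g n] (g (n + 1))

end AGame

/-!
Adding the ordinary nimber `*m`, all of whose positions are active, makes every position of the
sum active, so activeness plays no role there and the Sprague–Grundy argument applies verbatim:
`G + *m` is a 𝒫-position exactly when `𝒢(G) = m`. Since `𝒢(*^γ n) = n`, the sum `*^γ n + *n`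
is a 𝒫-position, and the equivalence `G ≡ *^γ n` transfers this to `G + *n`, whence `𝒢(G) = n`.
-/

namespace AGame

lemma opts_mk (gs : List AGame) (g : Bool) : (mk gs g).opts = gs := rfl

lemma act_mk (gs : List AGame) (g : Bool) : (mk gs g).act = g := rfl

lemma act_add (G H : AGame) : (add G H).act = (G.act || H.act) := by
  rw [add, act_mk]

lemma mem_opts_add {G H X : AGame} :
    X ∈ (add G H).opts ↔ (∃ G' ∈ G.opts, X = add G' H) ∨ ∃ H' ∈ H.opts, X = add G H' := by
  rw [add, opts_mk]
  simp only [List.mem_append, List.mem_map, List.mem_attach, true_and, Subtype.exists,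
    exists_prop, eq_comm]

lemma act_star (γ : ℕ → Bool) (n : ℕ) : (star γ n).act = γ n := by
  rw [star, act_mk]

lemma mem_opts_star {γ : ℕ → Bool} {n : ℕ} {X : AGame} :
    X ∈ (star γ n).opts ↔ ∃ j < n, X = star γ j := by
  rw [star, opts_mk]
  simp only [List.mem_map, List.mem_attach, true_and, Subtype.exists, List.mem_range,
    exists_prop, eq_comm]

lemma pPos_iff (G : AGame) : PPos G ↔ G.act = false ∨ ∀ G' ∈ G.opts, ¬ PPos G' := by
  rw [PPos]
  simp only [List.mem_attach, true_implies, Subtype.forall]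

lemma pPos_iff_of_act (G : AGame) (hG : G.act = true) : PPos G ↔ ∀ G' ∈ G.opts, ¬ PPos G' := by
  simp [pPos_iff G, hG]

lemma mex_notMem {S : Set ℕ} (hS : S.Finite) : mex S ∉ S :=
  Nat.sInf_mem hS.infinite_compl.nonempty

lemma mex_le_of_notMem {S : Set ℕ} {m : ℕ} (hm : m ∉ S) : mex S ≤ m :=
  Nat.sInf_le hm

lemma grundy_eq_mex (G : AGame) : grundy G = mex {m | ∃ G' ∈ G.opts, grundy G' = m} := by
  rw [grundy]
  simp only [List.mem_attach, true_and, Subtype.exists, exists_prop]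

lemma grundy_ne_of_mem_opts {G G' : AGame} (hG' : G' ∈ G.opts) : grundy G' ≠ grundy G := by
  have hfin : {m | ∃ G' ∈ G.opts, grundy G' = m}.Finite :=
    G.opts.finite_toSet.image grundy
  rw [grundy_eq_mex G]
  exact fun h => mex_notMem hfin ⟨G', hG', h⟩

lemma grundy_le_of_forall_ne {G : AGame} {m : ℕ} (h : ∀ G' ∈ G.opts, grundy G' ≠ m) :
    grundy G ≤ m := by
  rw [grundy_eq_mex]
  exact mex_le_of_notMem fun ⟨G', hG', hm⟩ => h G' hG' hm

lemma grundy_star (γ : ℕ → Bool) (n : ℕ) : grundy (star γ n) = n := by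
  induction n using Nat.strong_induction_on with
  | _ n ih =>
    have hle : grundy (star γ n) ≤ n := grundy_le_of_forall_ne fun X hX => by
      obtain ⟨j, hj, rfl⟩ := mem_opts_star.mp hX
      rw [ih j hj]
      exact hj.ne
    have hge : ∀ j < n, grundy (star γ n) ≠ j := fun j hj h =>
      grundy_ne_of_mem_opts (mem_opts_star.mpr ⟨j, hj, rfl⟩) (by rw [ih j hj, h])
    by_contra hne
    exact hge _ (lt_of_le_of_ne hle hne) rfl

/-- The ordinary nimber `*n`: the nimber with activeness whose positions are all active. -/
def nim (n : ℕ) : AGame := star (fun _ => true) n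

lemma pPos_add_nim_iff_forall (G : AGame) (m : ℕ) :
    PPos (add G (nim m)) ↔
      (∀ G' ∈ G.opts, ¬ PPos (add G' (nim m))) ∧ ∀ j < m, ¬ PPos (add G (nim j)) := by
  rw [pPos_iff_of_act _ (by rw [act_add, nim, act_star, Bool.or_true])]
  constructor
  · intro h
    refine ⟨fun G' hG' => h _ (mem_opts_add.mpr (.inl ⟨G', hG', rfl⟩)), fun j hj => ?_⟩
    exact h _ (mem_opts_add.mpr (.inr ⟨nim j, mem_opts_star.mpr ⟨j, hj, rfl⟩, rfl⟩))
  · rintro ⟨hG, hnim⟩ X hX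
    rcases mem_opts_add.mp hX with ⟨G', hG', rfl⟩ | ⟨H', hH', rfl⟩
    · exact hG G' hG'
    · obtain ⟨j, hj, rfl⟩ := mem_opts_star.mp hH'
      exact hnim j hj

theorem pPos_add_nim_iff (G : AGame) (m : ℕ) : PPos (add G (nim m)) ↔ grundy G = m := by
  rw [pPos_add_nim_iff_forall]
  constructor
  · rintro ⟨hG, hnim⟩
    have hle : grundy G ≤ m := grundy_le_of_forall_ne fun G' hG' h =>
      hG G' hG' ((pPos_add_nim_iff G' m).mpr h)
    by_contra hne
    exact hnim _ (lt_of_le_of_ne hle hne) ((pPos_add_nim_iff G _).mpr rfl)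
  · rintro rfl
    refine ⟨fun G' hG' h => grundy_ne_of_mem_opts hG' ((pPos_add_nim_iff G' _).mp h), ?_⟩
    exact fun j hj h => hj.ne' ((pPos_add_nim_iff G j).mp h)
termination_by sizeOf G + m
decreasing_by
  all_goals first
    | have := sizeOf_lt_of_mem hG'; omega
    | omega

end AGame

/-- A game equivalent to a nimber with activeness `*^γ n` has ordinary Grundy value `n`. -/
theorem AGame.grundy_of_equiv_star (G : AGame) (γ : ℕ → Bool) (n : ℕ)
    (h : AGame.Equiv G (AGame.star γ n)) :
    AGame.grundy G = n := by
  have hstar : PPos (add (star γ n) (nim n)) := (pPos_add_nim_iff _ n).mpr (grundy_star γ n)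
  exact (pPos_add_nim_iff G n).mp ((h (nim n)).mpr hstar)
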